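/- Let X be an n×L indicator matrix with L ≥ 1, Z ∈ ℝⁿ, Y ∈ ℝⁿ, and λ > 0. Let X*Z denote the n×L matrix whose i-th column is the entrywise product of the i-th column of X with Z, and W = [X (X*Z)]. Consider (A) the unconstrained group-lasso problem: minimize over (μ, β₁, β₂, β₁:₂) ∈ ℝ × ℝᴸ × ℝ × ℝ^{2L} the objective (1/2)‖Y − μ·1 − Xβ₁ − β₂·Z − W·β₁:₂‖₂² + λ(‖β₁‖₂ + |β₂| + ‖β₁:₂‖₂); and (B) the constrained overlapped group-lasso problem: minimize over (μ, α₁, α₂, α̃₁, α̃₂, α₁:₂) ∈ ℝ × ℝᴸ × ℝ × ℝᴸ × ℝ × ℝᴸ the objective (1/2)‖Y − μ·1 − Xα₁ − α₂·Z − Xα̃₁ − α̃₂·Z − (X*Z)·α₁:₂‖₂² + λ(‖α₁‖₂ + |α₂| + √(‖α̃₁‖₂² + L·α̃₂² + ‖α₁:₂‖₂²)) subject to ∑ᵢ α₁ⁱ = 0, ∑ᵢ α̃₁ⁱ = 0, and ∑ᵢ α₁:₂ⁱ = 0. Then the two problems are equivalent: their infima are equal, and the map sending (μ, α₁, α₂,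 α̃₁, α̃₂, α₁:₂) to (μ, α₁, α₂, β₁:₂) with β₁:₂ the concatenation of α̃₁ and α̃₂·1_L + α₁:₂ sends minimizers of (B) to minimizers of (A), and every minimizer of (A) arises in this way from a minimizer of (B). -/
import Mathlib


open scoped BigOperators

noncomputable section

/-- Euclidean norm of a finitely indexed vector. -/
def norm2 {m : Type*} [Fintype m] (v : m → ℝ) : ℝ := Real.sqrt (∑ i, v i ^ 2)

/-- `X*Z`: the `n×L` matrix whose `i`-th column is the entrywise product of the `i`-th
column of `X` with `Z`. -/
def colMul {n L : ℕ} (X : Matrix (Fin n) (Fin L) ℝ) (Z : Fin n → ℝ) :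
    Matrix (Fin n) (Fin L) ℝ :=
  fun k i => X k i * Z k

/-- `W = [X  (X*Z)]`: the `n×(2L)` matrix formed by concatenating `X` and `X*Z`. -/
def Wmat {n L : ℕ} (X : Matrix (Fin n) (Fin L) ℝ) (Z : Fin n → ℝ) :
    Matrix (Fin n) (Fin L ⊕ Fin L) ℝ :=
  fun k => Sum.elim (fun i => X k i) (fun i => colMul X Z k i)

/-- Objective of the unconstrained group-lasso problem (A), variables
`(μ, β₁, β₂, β₁:₂) ∈ ℝ × ℝᴸ × ℝ × ℝ^{2L}`. -/
def objA {n L : ℕ} (X : Matrix (Fin n) (Fin L) ℝ) (Z Y : Fin n → ℝ) (lam : ℝ)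
    (p : ℝ × (Fin L → ℝ) × ℝ × (Fin L ⊕ Fin L → ℝ)) : ℝ :=
  (1 / 2) * (∑ k, (Y k - p.1 - X.mulVec p.2.1 k - p.2.2.1 * Z k
      - (Wmat X Z).mulVec p.2.2.2 k) ^ 2)
    + lam * (norm2 p.2.1 + |p.2.2.1| + norm2 p.2.2.2)

/-- Objective of the constrained overlapped group-lasso problem (B), variables
`(μ, α₁, α₂, α̃₁, α̃₂, α₁:₂) ∈ ℝ × ℝᴸ × ℝ × ℝᴸ × ℝ × ℝᴸ`. -/
def objB {n L : ℕ} (X : Matrix (Fin n) (Fin L) ℝ) (Z Y : Fin n → ℝ) (lam : ℝ)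
    (q : ℝ × (Fin L → ℝ) × ℝ × (Fin L → ℝ) × ℝ × (Fin L → ℝ)) : ℝ :=
  (1 / 2) * (∑ k, (Y k - q.1 - X.mulVec q.2.1 k - q.2.2.1 * Z k
      - X.mulVec q.2.2.2.1 k - q.2.2.2.2.1 * Z k - (colMul X Z).mulVec q.2.2.2.2.2 k) ^ 2)
    + lam * (norm2 q.2.1 + |q.2.2.1|
      + Real.sqrt ((∑ i, q.2.2.2.1 i ^ 2) + (L : ℝ) * q.2.2.2.2.1 ^ 2
          + ∑ i, q.2.2.2.2.2 i ^ 2))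

/-- Zero-sum constraints for problem (B). -/
def constraintsB {L : ℕ}
    (q : ℝ × (Fin L → ℝ) × ℝ × (Fin L → ℝ) × ℝ × (Fin L → ℝ)) : Prop :=
  (∑ i, q.2.1 i = 0) ∧ (∑ i, q.2.2.2.1 i = 0) ∧ (∑ i, q.2.2.2.2.2 i = 0)

/-- The map from problem-(B) variables to problem-(A) variables:
`(μ, α₁, α₂, α̃₁, α̃₂, α₁:₂) ↦ (μ, α₁, α₂, β₁:₂)` with `β₁:₂` the concatenation of
`α̃₁` and `α̃₂·1_L + α₁:₂`. -/
def toA {L : ℕ} (q : ℝ × (Fin L → ℝ) × ℝ × (Fin L → ℝ) × ℝ × (Fin L → ℝ)) :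
    ℝ × (Fin L → ℝ) × ℝ × (Fin L ⊕ Fin L → ℝ) :=
  (q.1, q.2.1, q.2.2.1,
    Sum.elim (fun i => q.2.2.2.1 i) (fun i => q.2.2.2.2.1 + q.2.2.2.2.2 i))

namespace Aux

lemma mulVec_apply {n L : ℕ} (M : Matrix (Fin n) (Fin L) ℝ) (v : Fin L → ℝ) (k : Fin n) :
    M.mulVec v k = ∑ i, M k i * v i := rfl

lemma rowSum {n L : ℕ} {X : Matrix (Fin n) (Fin L) ℝ}
    (hX : ∀ k : Fin n, ∃ i : Fin L, ∀ j : Fin L, X k j = if j = i then (1 : ℝ) else 0)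
    (k : Fin n) : ∑ i, X k i = 1 := by
  obtain ⟨i, hi⟩ := hX k
  simp [hi]

lemma mulVec_sub_const {n L : ℕ} {X : Matrix (Fin n) (Fin L) ℝ}
    (hX : ∀ k : Fin n, ∃ i : Fin L, ∀ j : Fin L, X k j = if j = i then (1 : ℝ) else 0)
    (v : Fin L → ℝ) (t : ℝ) (k : Fin n) :
    X.mulVec (fun i => v i - t) k = X.mulVec v k - t := by
  simp only [mulVec_apply, mul_sub]
  rw [Finset.sum_sub_distrib, ← Finset.sum_mul, rowSum hX k, one_mul]

lemma colMul_mulVec_sub_const {n L : ℕ} {X : Matrix (Fin n) (Fin L) ℝ}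
    (hX : ∀ k : Fin n, ∃ i : Fin L, ∀ j : Fin L, X k j = if j = i then (1 : ℝ) else 0)
    (Z : Fin n → ℝ) (v : Fin L → ℝ) (t : ℝ) (k : Fin n) :
    (colMul X Z).mulVec (fun i => v i - t) k = (colMul X Z).mulVec v k - t * Z k := by
  simp only [mulVec_apply, colMul, mul_sub]
  rw [Finset.sum_sub_distrib]
  congr 1
  calc ∑ i, X k i * Z k * t = (∑ i, X k i) * (Z k * t) := by
        rw [Finset.sum_mul]; exact Finset.sum_congr rfl fun i _ => by ring
    _ = t * Z k := by rw [rowSum hX k]; ring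

lemma Wmat_mulVec {n L : ℕ} (X : Matrix (Fin n) (Fin L) ℝ) (Z : Fin n → ℝ)
    (w : Fin L ⊕ Fin L → ℝ) (k : Fin n) :
    (Wmat X Z).mulVec w k
      = X.mulVec (fun i => w (Sum.inl i)) k
        + (colMul X Z).mulVec (fun i => w (Sum.inr i)) k := by
  simp only [mulVec_apply]
  rw [show (Matrix.mulVec (Wmat X Z) w k) = ∑ j : Fin L ⊕ Fin L, Wmat X Z k j * w j from rfl]
  rw [Fintype.sum_sum_type]
  rfl

lemma norm2_sum_type {L : ℕ} (w : Fin L ⊕ Fin L → ℝ) :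
    norm2 w = Real.sqrt ((∑ i, w (Sum.inl i) ^ 2) + ∑ i, w (Sum.inr i) ^ 2) := by
  rw [norm2, Fintype.sum_sum_type]

lemma sumsq_sub_const {L : ℕ} (v : Fin L → ℝ) (t : ℝ) :
    ∑ i, (v i - t) ^ 2 = (∑ i, v i ^ 2) - 2 * t * (∑ i, v i) + L * t ^ 2 := by
  have : ∀ i : Fin L, (v i - t) ^ 2 = v i ^ 2 - 2 * t * v i + t ^ 2 := fun i => by ring
  simp only [this, Finset.sum_add_distrib, Finset.sum_sub_distrib,
    Finset.sum_const, Finset.card_univ, Fintype.card_fin, nsmul_eq_mul]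
  rw [← Finset.mul_sum]


def mean {L : ℕ} (v : Fin L → ℝ) : ℝ := (∑ i, v i) / L

lemma sum_eq_mean {L : ℕ} (hL : L ≠ 0) (v : Fin L → ℝ) : ∑ i, v i = L * mean v := by
  rw [mean]
  field_simp

lemma centered_sumsq {L : ℕ} (hL : L ≠ 0) (v : Fin L → ℝ) :
    ∑ i, (v i - mean v) ^ 2 = (∑ i, v i ^ 2) - L * (mean v) ^ 2 := by
  have h := sumsq_sub_const v (mean v)
  rw [sum_eq_mean hL v] at h
  rw [h]; ring

lemma sum_center {L : ℕ} (hL : L ≠ 0) (v : Fin L → ℝ) :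
    ∑ i, (v i - mean v) = 0 := by
  rw [Finset.sum_sub_distrib, sum_eq_mean hL, Finset.sum_const, Finset.card_univ,
    Fintype.card_fin, nsmul_eq_mul, sub_self]

/-- The inverse/centering map from problem-(A) variables to constrained (B) variables. -/
def Phi {L : ℕ} (p : ℝ × (Fin L → ℝ) × ℝ × (Fin L ⊕ Fin L → ℝ)) :
    ℝ × (Fin L → ℝ) × ℝ × (Fin L → ℝ) × ℝ × (Fin L → ℝ) :=
  (p.1 + mean p.2.1 + mean (fun i => p.2.2.2 (Sum.inl i)),
   fun i => p.2.1 i - mean p.2.1,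
   p.2.2.1,
   fun i => p.2.2.2 (Sum.inl i) - mean (fun i => p.2.2.2 (Sum.inl i)),
   mean (fun i => p.2.2.2 (Sum.inr i)),
   fun i => p.2.2.2 (Sum.inr i) - mean (fun i => p.2.2.2 (Sum.inr i)))

lemma constraints_Phi {L : ℕ} (hL : L ≠ 0) (p : ℝ × (Fin L → ℝ) × ℝ × (Fin L ⊕ Fin L → ℝ)) :
    constraintsB (Phi p) :=
  ⟨sum_center hL _, sum_center hL _, sum_center hL _⟩

/-- On the constraint set, `toA` preserves objective values. -/
lemma objA_toA {n L : ℕ} (X : Matrix (Fin n) (Fin L) ℝ)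
    (hX : ∀ k : Fin n, ∃ i : Fin L, ∀ j : Fin L, X k j = if j = i then (1 : ℝ) else 0)
    (Z Y : Fin n → ℝ) (lam : ℝ)
    (q : ℝ × (Fin L → ℝ) × ℝ × (Fin L → ℝ) × ℝ × (Fin L → ℝ))
    (hq : ∑ i, q.2.2.2.2.2 i = 0) :
    objA X Z Y lam (toA q) = objB X Z Y lam q := by
  obtain ⟨μ, a1, a2, b, t, c⟩ := q
  simp only at hq
  simp only [objA, objB, toA, norm2]
  congr 1
  · -- residual part
    congr 1
    refine Finset.sum_congr rfl fun k _ => ?_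
    have h1 : (Wmat X Z).mulVec (Sum.elim (fun i => b i) fun i => t + c i) k
        = X.mulVec b k + (t * Z k + (colMul X Z).mulVec c k) := by
      rw [Wmat_mulVec]
      congr 1
      have : (fun i => Sum.elim (fun i => b i) (fun i => t + c i) (Sum.inr i))
          = fun i => (t + c i) := rfl
      rw [this]
      have h2 : (colMul X Z).mulVec (fun i => t + c i) k
          = (colMul X Z).mulVec c k + t * Z k := by
        have := colMul_mulVec_sub_const hX Z (fun i => t + c i) t k
        simp only [add_sub_cancel_left] at this
        linarith
      rw [h2]; ring
    rw [h1]; ring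
  · -- penalty part
    congr 2
    rw [Fintype.sum_sum_type]
    congr 1
    simp only [Sum.elim_inl, Sum.elim_inr]
    have : ∑ i, (t + c i) ^ 2 = (L : ℝ) * t ^ 2 + ∑ i, c i ^ 2 := by
      have := sumsq_sub_const c (-t)
      simp only [sub_neg_eq_add, neg_neg] at this
      rw [Finset.sum_congr rfl fun i _ => by rw [add_comm (c i) t]] at this
      rw [this, hq]
      ring
    rw [this]
    ring


lemma objA_decomp {n L : ℕ} (X : Matrix (Fin n) (Fin L) ℝ) (Z Y : Fin n → ℝ) (lam : ℝ)
    (p : ℝ × (Fin L → ℝ) × ℝ × (Fin L ⊕ Fin L → ℝ)) :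
    objA X Z Y lam p
      = (1 / 2) * (∑ k, (Y k - p.1 - X.mulVec p.2.1 k - p.2.2.1 * Z k
            - (Wmat X Z).mulVec p.2.2.2 k) ^ 2)
        + lam * (Real.sqrt (∑ i, p.2.1 i ^ 2) + |p.2.2.1|
            + Real.sqrt ((∑ i, p.2.2.2 (Sum.inl i) ^ 2) + ∑ i, p.2.2.2 (Sum.inr i) ^ 2)) := by
  rw [objA, norm2_sum_type]
  rfl

lemma objB_Phi_decomp {n L : ℕ} (hL : L ≠ 0) (X : Matrix (Fin n) (Fin L) ℝ)
    (hX : ∀ k : Fin n, ∃ i : Fin L, ∀ j : Fin L, X k j = if j = i then (1 : ℝ) else 0)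
    (Z Y : Fin n → ℝ) (lam : ℝ) (p : ℝ × (Fin L → ℝ) × ℝ × (Fin L ⊕ Fin L → ℝ)) :
    objB X Z Y lam (Phi p)
      = (1 / 2) * (∑ k, (Y k - p.1 - X.mulVec p.2.1 k - p.2.2.1 * Z k
            - (Wmat X Z).mulVec p.2.2.2 k) ^ 2)
        + lam * (Real.sqrt ((∑ i, p.2.1 i ^ 2) - L * (mean p.2.1) ^ 2) + |p.2.2.1|
            + Real.sqrt ((∑ i, p.2.2.2 (Sum.inl i) ^ 2)
                - L * (mean (fun i => p.2.2.2 (Sum.inl i))) ^ 2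
                + ∑ i, p.2.2.2 (Sum.inr i) ^ 2)) := by
  obtain ⟨μ, b1, b2, w⟩ := p
  simp only [objB, Phi, norm2]
  congr 1
  · -- residual part
    congr 1
    refine Finset.sum_congr rfl fun k _ => ?_
    rw [mulVec_sub_const hX b1 (mean b1) k,
        mulVec_sub_const hX (fun i => w (Sum.inl i)) _ k,
        colMul_mulVec_sub_const hX Z (fun i => w (Sum.inr i)) _ k,
        Wmat_mulVec]
    ring
  · -- penalty part
    congr 2
    · rw [centered_sumsq hL]
    · congr 1
      rw [centered_sumsq hL, centered_sumsq hL]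
      ring

lemma sqrt_center_le {L : ℕ} (S m r : ℝ) (hr : 0 ≤ r) :
    Real.sqrt (S - L * m ^ 2 + r) ≤ Real.sqrt (S + r) := by
  apply Real.sqrt_le_sqrt
  nlinarith [sq_nonneg m, Nat.cast_nonneg (α := ℝ) L]

lemma objB_Phi_le {n L : ℕ} (hL : L ≠ 0) (X : Matrix (Fin n) (Fin L) ℝ)
    (hX : ∀ k : Fin n, ∃ i : Fin L, ∀ j : Fin L, X k j = if j = i then (1 : ℝ) else 0)
    (Z Y : Fin n → ℝ) (lam : ℝ) (hlam : 0 ≤ lam)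
    (p : ℝ × (Fin L → ℝ) × ℝ × (Fin L ⊕ Fin L → ℝ)) :
    objB X Z Y lam (Phi p) ≤ objA X Z Y lam p := by
  rw [objA_decomp, objB_Phi_decomp hL X hX]
  have h1 : Real.sqrt ((∑ i, p.2.1 i ^ 2) - L * (mean p.2.1) ^ 2)
      ≤ Real.sqrt (∑ i, p.2.1 i ^ 2) := by
    have := sqrt_center_le (∑ i, p.2.1 i ^ 2) (mean p.2.1) 0 le_rfl (L := L)
    simpa using this
  have h3 := sqrt_center_le (∑ i, p.2.2.2 (Sum.inl i) ^ 2)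
      (mean (fun i => p.2.2.2 (Sum.inl i))) (∑ i, p.2.2.2 (Sum.inr i) ^ 2)
      (Finset.sum_nonneg fun i _ => sq_nonneg _) (L := L)
  have := mul_le_mul_of_nonneg_left
    (add_le_add (add_le_add_right h1 |p.2.2.1|) h3) hlam
  linarith

lemma mean_zero_of_sqrt_eq {L : ℕ} (hL : L ≠ 0) (v : Fin L → ℝ) (r : ℝ) (hr : 0 ≤ r)
    (h : Real.sqrt ((∑ i, v i ^ 2) - L * (mean v) ^ 2 + r)
        = Real.sqrt ((∑ i, v i ^ 2) + r)) :
    mean v = 0 := by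
  have hnn : 0 ≤ (∑ i, v i ^ 2) - L * (mean v) ^ 2 + r := by
    have := centered_sumsq hL v
    have h0 : 0 ≤ ∑ i, (v i - mean v) ^ 2 := Finset.sum_nonneg fun i _ => sq_nonneg _
    linarith [this ▸ h0]
  have := congrArg (· ^ 2) h
  simp only [Real.sq_sqrt hnn,
    Real.sq_sqrt (by positivity : (0:ℝ) ≤ (∑ i, v i ^ 2) + r)] at this
  have hm : (L : ℝ) * (mean v) ^ 2 = 0 := by linarith
  have hLpos : (0:ℝ) < L := by exact_mod_cast Nat.pos_of_ne_zero hL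
  have := (mul_eq_zero.mp hm).resolve_left (ne_of_gt hLpos)
  exact pow_eq_zero_iff (n := 2) (by norm_num) |>.mp this

lemma toA_Phi {L : ℕ} (p : ℝ × (Fin L → ℝ) × ℝ × (Fin L ⊕ Fin L → ℝ))
    (h1 : mean p.2.1 = 0) (h2 : mean (fun i => p.2.2.2 (Sum.inl i)) = 0) :
    toA (Phi p) = p := by
  obtain ⟨μ, b1, b2, w⟩ := p
  simp only at h1 h2
  simp only [toA, Phi, h1, h2, add_zero, sub_zero]
  refine Prod.ext rfl (Prod.ext rfl (Prod.ext rfl ?_))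
  funext x
  cases x with
  | inl i => rfl
  | inr i => simp


lemma objA_nonneg {n L : ℕ} (X : Matrix (Fin n) (Fin L) ℝ) (Z Y : Fin n → ℝ)
    {lam : ℝ} (hlam : 0 ≤ lam) (p : ℝ × (Fin L → ℝ) × ℝ × (Fin L ⊕ Fin L → ℝ)) :
    0 ≤ objA X Z Y lam p := by
  apply add_nonneg
  · exact mul_nonneg (by norm_num) (Finset.sum_nonneg fun k _ => sq_nonneg _)
  · exact mul_nonneg hlam (add_nonneg (add_nonneg (Real.sqrt_nonneg _) (abs_nonneg _))
      (Real.sqrt_nonneg _))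

lemma objB_nonneg {n L : ℕ} (X : Matrix (Fin n) (Fin L) ℝ) (Z Y : Fin n → ℝ)
    {lam : ℝ} (hlam : 0 ≤ lam) (q : ℝ × (Fin L → ℝ) × ℝ × (Fin L → ℝ) × ℝ × (Fin L → ℝ)) :
    0 ≤ objB X Z Y lam q := by
  apply add_nonneg
  · exact mul_nonneg (by norm_num) (Finset.sum_nonneg fun k _ => sq_nonneg _)
  · exact mul_nonneg hlam (add_nonneg (add_nonneg (Real.sqrt_nonneg _) (abs_nonneg _))
      (Real.sqrt_nonneg _))

end Aux

open Aux in
/-- **Theorem 2.** For a categorical variable `X` (indicator matrix) and a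
continuous variable `Z`, the unconstrained group-lasso (A) and the constrained overlapped
group-lasso (B) are equivalent: their infima coincide, `toA` maps minimizers of (B) to
minimizers of (A), and every minimizer of (A) arises in this way. -/
theorem stmt_13 (n L : ℕ) (hL : 1 ≤ L)
    (X : Matrix (Fin n) (Fin L) ℝ)
    (hX : ∀ k : Fin n, ∃ i : Fin L, ∀ j : Fin L, X k j = if j = i then (1 : ℝ) else 0)
    (Z Y : Fin n → ℝ) (lam : ℝ) (hlam : 0 < lam) :
    (sInf (Set.range (objA X Z Y lam))
        = sInf (objB X Z Y lam '' {q | constraintsB q})) ∧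
    (∀ q, constraintsB q → (∀ q', constraintsB q' → objB X Z Y lam q ≤ objB X Z Y lam q') →
      ∀ p, objA X Z Y lam (toA q) ≤ objA X Z Y lam p) ∧
    (∀ p, (∀ p', objA X Z Y lam p ≤ objA X Z Y lam p') →
      ∃ q, constraintsB q ∧
        (∀ q', constraintsB q' → objB X Z Y lam q ≤ objB X Z Y lam q') ∧
        toA q = p) := by
  have hL0 : L ≠ 0 := by omega
  have hlam' : (0:ℝ) ≤ lam := hlam.le
  have hAB : ∀ q, constraintsB q → objA X Z Y lam (toA q) = objB X Z Y lam q :=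
    fun q hq => objA_toA X hX Z Y lam q hq.2.2
  have hPhiLe : ∀ p, objB X Z Y lam (Phi p) ≤ objA X Z Y lam p :=
    objB_Phi_le hL0 X hX Z Y lam hlam'
  have hPhiC : ∀ p : ℝ × (Fin L → ℝ) × ℝ × (Fin L ⊕ Fin L → ℝ), constraintsB (Phi p) :=
    constraints_Phi hL0
  have bddA : BddBelow (Set.range (objA X Z Y lam)) := by
    refine ⟨0, ?_⟩
    rintro x ⟨p, rfl⟩
    exact objA_nonneg X Z Y hlam' p
  have bddB : BddBelow (objB X Z Y lam '' {q | constraintsB q}) := by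
    refine ⟨0, ?_⟩
    rintro x ⟨q, _, rfl⟩
    exact objB_nonneg X Z Y hlam' q
  have neA : (Set.range (objA X Z Y lam)).Nonempty := ⟨_, ⟨(0, 0, 0, 0), rfl⟩⟩
  have neB : (objB X Z Y lam '' {q | constraintsB q}).Nonempty := by
    refine ⟨_, ⟨(0, 0, 0, 0, 0, 0), ?_, rfl⟩⟩
    simp [constraintsB]
  refine ⟨?_, ?_, ?_⟩
  · apply le_antisymm
    · apply csInf_le_csInf bddA neB
      rintro x ⟨q, hq, rfl⟩
      exact ⟨toA q, hAB q hq⟩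
    · apply le_csInf neA
      rintro x ⟨p, rfl⟩
      exact (csInf_le bddB ⟨Phi p, hPhiC p, rfl⟩).trans (hPhiLe p)
  · intro q hq hmin p
    calc objA X Z Y lam (toA q) = objB X Z Y lam q := hAB q hq
      _ ≤ objB X Z Y lam (Phi p) := hmin _ (hPhiC p)
      _ ≤ objA X Z Y lam p := hPhiLe p
  · intro p hmin
    refine ⟨Phi p, hPhiC p, fun q' hq' => ?_, ?_⟩
    · calc objB X Z Y lam (Phi p) ≤ objA X Z Y lam p := hPhiLe p
        _ ≤ objA X Z Y lam (toA q') := hmin _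
        _ = objB X Z Y lam q' := hAB q' hq'
    · have heq : objB X Z Y lam (Phi p) = objA X Z Y lam p :=
        le_antisymm (hPhiLe p) (by
          calc objA X Z Y lam p ≤ objA X Z Y lam (toA (Phi p)) := hmin _
            _ = objB X Z Y lam (Phi p) := hAB _ (hPhiC p))
      rw [objA_decomp, objB_Phi_decomp hL0 X hX] at heq
      set S1 := ∑ i, p.2.1 i ^ 2 with hS1
      set Sb := ∑ i, p.2.2.2 (Sum.inl i) ^ 2 with hSb
      set Sc := ∑ i, p.2.2.2 (Sum.inr i) ^ 2 with hSc
      set m1 := mean p.2.1 with hm1d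
      set mb := mean (fun i => p.2.2.2 (Sum.inl i)) with hmbd
      have hScnn : 0 ≤ Sc := Finset.sum_nonneg fun i _ => sq_nonneg _
      have h1le : Real.sqrt (S1 - L * m1 ^ 2) ≤ Real.sqrt S1 := by
        have := sqrt_center_le (L := L) S1 m1 0 le_rfl
        simpa using this
      have h3le : Real.sqrt (Sb - L * mb ^ 2 + Sc) ≤ Real.sqrt (Sb + Sc) :=
        sqrt_center_le (L := L) Sb mb Sc hScnn
      have hkey : lam * (Real.sqrt (S1 - L * m1 ^ 2) + |p.2.2.1|
            + Real.sqrt (Sb - L * mb ^ 2 + Sc))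
          = lam * (Real.sqrt S1 + |p.2.2.1| + Real.sqrt (Sb + Sc)) := by linarith
      have hkey2 := mul_left_cancel₀ (ne_of_gt hlam) hkey
      have hs1 : Real.sqrt (S1 - L * m1 ^ 2) = Real.sqrt S1 := le_antisymm h1le (by linarith)
      have hs3 : Real.sqrt (Sb - L * mb ^ 2 + Sc) = Real.sqrt (Sb + Sc) :=
        le_antisymm h3le (by linarith)
      have hm1 : m1 = 0 := by
        apply mean_zero_of_sqrt_eq hL0 p.2.1 0 le_rfl
        simpa [← hS1, ← hm1d] using hs1
      have hmb : mb = 0 :=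
        mean_zero_of_sqrt_eq hL0 (fun i => p.2.2.2 (Sum.inl i)) Sc hScnn hs3
      exact toA_Phi p hm1 hmb

end
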